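/- For 2 ≤ m ≤ n, the bearded complete graph BK_{n,m} satisfies QEC(BK_{n,m}) = -(2 - √2) = QEC(P_4). -/
import Mathlib


/-- Distance matrix of the bearded complete graph BK_{n,m}: vertices 0,…,n-1 form
a clique K_n, and each pendant vertex n+k (0 ≤ k < m) is joined only to vertex k.
Distances: 1 within the clique, 1 between k and n+k, 2 between a pendant and
other clique vertices, 3 between distinct pendants. -/
def beardDist (n m : ℕ) (i j : Fin (n + m)) : ℝ :=
  if i = j then 0
  else if i.val < n ∧ j.val < n then 1
  else if i.val < n ∧ n ≤ j.val then (if j.val - n = i.val then 1 else 2)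
  else if n ≤ i.val ∧ j.val < n then (if i.val - n = j.val then 1 else 2)
  else 3

lemma beard_d_cc (n m : ℕ) (i j : Fin n) :
    beardDist n m (Fin.castAdd m i) (Fin.castAdd m j) = if i = j then 0 else 1 := by
  rcases i with ⟨i, hi⟩; rcases j with ⟨j, hj⟩
  simp only [beardDist, Fin.castAdd_mk, Fin.mk.injEq]
  split_ifs with h1 h2 <;> simp_all

lemma beard_d_cp (n m : ℕ) (i : Fin n) (k : Fin m) :
    beardDist n m (Fin.castAdd m i) (Fin.natAdd n k) = if (k : ℕ) = (i : ℕ) then 1 else 2 := by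
  rcases i with ⟨i, hi⟩; rcases k with ⟨k, hk⟩
  simp only [beardDist, Fin.castAdd_mk, Fin.natAdd_mk, Fin.mk.injEq]
  have h1 : ¬ (i = n + k) := by omega
  have h2 : ¬ (i < n ∧ n + k < n) := by omega
  have h3 : i < n ∧ n ≤ n + k := by omega
  have h4 : n + k - n = k := by omega
  simp [h1, h2, h3, h4]

lemma beard_d_pc (n m : ℕ) (k : Fin m) (i : Fin n) :
    beardDist n m (Fin.natAdd n k) (Fin.castAdd m i) = if (k : ℕ) = (i : ℕ) then 1 else 2 := by
  rcases i with ⟨i, hi⟩; rcases k with ⟨k, hk⟩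
  simp only [beardDist, Fin.castAdd_mk, Fin.natAdd_mk, Fin.mk.injEq]
  have h1 : ¬ (n + k = i) := by omega
  have h2 : ¬ (n + k < n ∧ i < n) := by omega
  have h3 : ¬ (n + k < n ∧ n ≤ i) := by omega
  have h4 : n ≤ n + k ∧ i < n := by omega
  have h5 : n + k - n = k := by omega
  simp [h1, h2, h3, h4, h5]

lemma beard_d_pp (n m : ℕ) (k l : Fin m) :
    beardDist n m (Fin.natAdd n k) (Fin.natAdd n l) = if k = l then 0 else 3 := by
  rcases k with ⟨k, hk⟩; rcases l with ⟨l, hl⟩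
  simp only [beardDist, Fin.natAdd_mk, Fin.mk.injEq]
  have h2 : ¬ (n + k < n ∧ n + l < n) := by omega
  have h3 : ¬ (n + k < n ∧ n ≤ n + l) := by omega
  have h4 : ¬ (n ≤ n + k ∧ n + l < n) := by omega
  by_cases h : n + k = n + l
  · have : k = l := by omega
    simp [h, this]
  · have : ¬ (k = l) := by omega
    simp [h, this, h2, h3, h4]

lemma beard_blk1 (n : ℕ) (c : ℝ) (a : Fin n → ℝ) :
    ∑ i, ∑ j, (if i = j then (0:ℝ) else c) * a i * a j
      = c * ((∑ i, a i)^2 - ∑ i, (a i)^2) := by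
  have e : ∀ i j : Fin n, (if i = j then (0:ℝ) else c) * a i * a j
      = c * (a i * a j) - (if j = i then c * (a i * a j) else 0) := by
    intro i j
    rcases eq_or_ne i j with h | h
    · simp [h]
    · rw [if_neg h, if_neg (Ne.symm h)]; ring
  simp_rw [e, Finset.sum_sub_distrib, Finset.sum_ite_eq', Finset.mem_univ, if_true,
    ← Finset.mul_sum, ← Finset.sum_mul, Finset.mul_sum]
  rw [← Finset.mul_sum, ← Finset.mul_sum, ← Finset.mul_sum]
  simp_rw [← pow_two]
  ring

lemma beard_blk3 (n m : ℕ) (hmn : m ≤ n) (b : Fin m → ℝ) (a : Fin n → ℝ) :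
    ∑ k : Fin m, ∑ i : Fin n, (if (k:ℕ) = (i:ℕ) then (1:ℝ) else 2) * b k * a i
      = 2*(∑ k, b k)*(∑ i, a i) - ∑ k : Fin m, b k * a (Fin.castLE hmn k) := by
  have e : ∀ (k : Fin m) (i : Fin n), (if (k:ℕ) = (i:ℕ) then (1:ℝ) else 2) * b k * a i
      = 2 * (b k * a i) - (if i = Fin.castLE hmn k then b k * a i else 0) := by
    intro k i
    have hiff : ((k:ℕ) = (i:ℕ)) ↔ (i = Fin.castLE hmn k) := by
      rw [Fin.ext_iff, Fin.coe_castLE]; omega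
    rcases eq_or_ne (k:ℕ) (i:ℕ) with h | h
    · rw [if_pos h, if_pos (hiff.mp h)]; ring
    · rw [if_neg h, if_neg (fun hh => h (hiff.mpr hh))]; ring
  simp_rw [e, Finset.sum_sub_distrib, Finset.sum_ite_eq', Finset.mem_univ, if_true,
    ← Finset.mul_sum]
  rw [← Finset.sum_mul]; ring

lemma beard_blk2 (n m : ℕ) (hmn : m ≤ n) (a : Fin n → ℝ) (b : Fin m → ℝ) :
    ∑ i : Fin n, ∑ k : Fin m, (if (k:ℕ) = (i:ℕ) then (1:ℝ) else 2) * a i * b k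
      = 2*(∑ k, b k)*(∑ i, a i) - ∑ k : Fin m, b k * a (Fin.castLE hmn k) := by
  rw [Finset.sum_comm]
  rw [← beard_blk3 n m hmn b a]
  apply Finset.sum_congr rfl; intro k _
  apply Finset.sum_congr rfl; intro i _
  ring

lemma beard_Q_identity (n m : ℕ) (hmn : m ≤ n) (f : Fin (n+m) → ℝ) :
    ∑ i, ∑ j, beardDist n m i j * f i * f j =
      ((∑ i : Fin n, f (Fin.castAdd m i))^2 - ∑ i : Fin n, f (Fin.castAdd m i)^2)
      + 3*((∑ k : Fin m, f (Fin.natAdd n k))^2 - ∑ k : Fin m, f (Fin.natAdd n k)^2)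
      + 4*(∑ k : Fin m, f (Fin.natAdd n k))*(∑ i : Fin n, f (Fin.castAdd m i))
      - 2*∑ k : Fin m, f (Fin.natAdd n k) * f (Fin.castAdd m (Fin.castLE hmn k)) := by
  have inner : ∀ i : Fin (n+m), ∑ j, beardDist n m i j * f i * f j
      = ∑ j : Fin n, beardDist n m i (Fin.castAdd m j) * f i * f (Fin.castAdd m j)
        + ∑ k : Fin m, beardDist n m i (Fin.natAdd n k) * f i * f (Fin.natAdd n k) :=
    fun i => Fin.sum_univ_add (f := fun j => beardDist n m i j * f i * f j)
  rw [Fin.sum_univ_add (f := fun i => ∑ j, beardDist n m i j * f i * f j)]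
  simp_rw [inner, Finset.sum_add_distrib]
  simp_rw [beard_d_cc, beard_d_cp, beard_d_pc, beard_d_pp]
  rw [beard_blk1 n 1 (fun i => f (Fin.castAdd m i)), beard_blk1 m 3 (fun k => f (Fin.natAdd n k)),
    beard_blk3 n m hmn (fun k => f (Fin.natAdd n k)) (fun i => f (Fin.castAdd m i)),
    beard_blk2 n m hmn (fun i => f (Fin.castAdd m i)) (fun k => f (Fin.natAdd n k))]
  ring

/-- for 2 ≤ m ≤ n, QEC(BK_{n,m}) = -(2 - √2) = QEC(P_4). -/
theorem qec_bearded_complete (n m : ℕ) (hm : 2 ≤ m) (hmn : m ≤ n) :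
    IsGreatest {x : ℝ | ∃ f : Fin (n + m) → ℝ,
      (∑ i, f i ^ 2) = 1 ∧ (∑ i, f i) = 0 ∧
      x = ∑ i, ∑ j, beardDist n m i j * f i * f j}
      (-(2 - Real.sqrt 2)) := by
  constructor
  · -- membership: an explicit optimal vector supported on {0, 1, n, n+1}
    have hn : 2 ≤ n := hm.trans hmn
    set s := Real.sqrt 2 with hsdef
    have hs2 : s^2 = 2 := Real.sq_sqrt (by norm_num)
    have hs0 : 0 ≤ s := Real.sqrt_nonneg 2
    have h84 : (0:ℝ) < 8 + 4*s := by linarith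
    obtain ⟨p, hp2⟩ : ∃ p : ℝ, p^2 = (8 + 4*s)⁻¹ :=
      ⟨(Real.sqrt (8 + 4*s))⁻¹, by rw [← Real.sqrt_inv, Real.sq_sqrt (by positivity)]⟩
    have h8 : (8 + 4*s) * p^2 = 1 := by rw [hp2]; field_simp
    obtain ⟨q, hq⟩ : ∃ q : ℝ, q = -(1+s)*p := ⟨_, rfl⟩
    obtain ⟨F, hF⟩ : ∃ F : Fin (n+m) → ℝ, F = fun (i : Fin (n+m)) => if (i:ℕ) = 0 then q
        else if (i:ℕ) = 1 then -q else if (i:ℕ) = n then p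
        else if (i:ℕ) = n+1 then -p else 0 := ⟨_, rfl⟩
    have hFval : ∀ i : Fin (n+m), F i = if (i:ℕ) = 0 then q
        else if (i:ℕ) = 1 then -q else if (i:ℕ) = n then p
        else if (i:ℕ) = n+1 then -p else 0 := fun i => by rw [hF]
    obtain ⟨i0, hi0⟩ : ∃ i0 : Fin n, (i0:ℕ) = 0 := ⟨⟨0, by omega⟩, rfl⟩
    obtain ⟨i1, hi1⟩ : ∃ i1 : Fin n, (i1:ℕ) = 1 := ⟨⟨1, by omega⟩, rfl⟩
    obtain ⟨k0, hk0⟩ : ∃ k0 : Fin m, (k0:ℕ) = 0 := ⟨⟨0, by omega⟩, rfl⟩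
    obtain ⟨k1, hk1⟩ : ∃ k1 : Fin m, (k1:ℕ) = 1 := ⟨⟨1, by omega⟩, rfl⟩
    have hi01 : ¬ (i0 = i1) := by rw [Fin.ext_iff, hi0, hi1]; omega
    have hi10 : ¬ (i1 = i0) := by rw [Fin.ext_iff, hi0, hi1]; omega
    have hk01 : ¬ (k0 = k1) := by rw [Fin.ext_iff, hk0, hk1]; omega
    have hk10 : ¬ (k1 = k0) := by rw [Fin.ext_iff, hk0, hk1]; omega
    have ha : ∀ i : Fin n, F (Fin.castAdd m i)
        = (if i = i0 then q else 0) + (if i = i1 then -q else 0) := by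
      rintro ⟨iv, hlt⟩
      rw [hFval]
      simp only [Fin.castAdd_mk, Fin.ext_iff, hi0, hi1]
      split_ifs <;> first | ring1 | (exfalso; omega)
    have hb : ∀ k : Fin m, F (Fin.natAdd n k)
        = (if k = k0 then p else 0) + (if k = k1 then -p else 0) := by
      rintro ⟨kv, hlt⟩
      rw [hFval]
      simp only [Fin.natAdd_mk, Fin.ext_iff, hk0, hk1]
      split_ifs <;> first | ring1 | (exfalso; omega)
    have ha2 : ∀ i : Fin n, F (Fin.castAdd m i)^2
        = (if i = i0 then q^2 else 0) + (if i = i1 then q^2 else 0) := by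
      intro i
      rw [ha i]
      rcases eq_or_ne i i0 with h | h <;> rcases eq_or_ne i i1 with h' | h' <;>
        simp [h, h', hi01, hi10] <;> ring1
    have hb2 : ∀ k : Fin m, F (Fin.natAdd n k)^2
        = (if k = k0 then p^2 else 0) + (if k = k1 then p^2 else 0) := by
      intro k
      rw [hb k]
      rcases eq_or_ne k k0 with h | h <;> rcases eq_or_ne k k1 with h' | h' <;>
        simp [h, h', hk01, hk10] <;> ring1
    have hcl : ∀ k : Fin m, F (Fin.castAdd m (Fin.castLE hmn k))
        = (if k = k0 then q else 0) + (if k = k1 then -q else 0) := by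
      intro k
      rw [ha (Fin.castLE hmn k)]
      have e0 : (Fin.castLE hmn k = i0) ↔ (k = k0) := by
        rw [Fin.ext_iff, Fin.ext_iff, Fin.coe_castLE, hi0, hk0]
      have e1 : (Fin.castLE hmn k = i1) ↔ (k = k1) := by
        rw [Fin.ext_iff, Fin.ext_iff, Fin.coe_castLE, hi1, hk1]
      rw [if_congr e0 rfl rfl, if_congr e1 rfl rfl]
    have hab : ∀ k : Fin m, F (Fin.natAdd n k) * F (Fin.castAdd m (Fin.castLE hmn k))
        = (if k = k0 then p*q else 0) + (if k = k1 then p*q else 0) := by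
      intro k
      rw [hb k, hcl k]
      rcases eq_or_ne k k0 with h | h <;> rcases eq_or_ne k k1 with h' | h' <;>
        simp [h, h', hk01, hk10] <;> ring1
    have sA : ∑ i : Fin n, F (Fin.castAdd m i) = 0 := by
      simp_rw [ha, Finset.sum_add_distrib, Finset.sum_ite_eq', Finset.mem_univ, if_true]
      ring
    have sB : ∑ k : Fin m, F (Fin.natAdd n k) = 0 := by
      simp_rw [hb, Finset.sum_add_distrib, Finset.sum_ite_eq', Finset.mem_univ, if_true]
      ring
    have sA2 : ∑ i : Fin n, F (Fin.castAdd m i)^2 = 2*q^2 := by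
      simp_rw [ha2, Finset.sum_add_distrib, Finset.sum_ite_eq', Finset.mem_univ, if_true]
      ring
    have sB2 : ∑ k : Fin m, F (Fin.natAdd n k)^2 = 2*p^2 := by
      simp_rw [hb2, Finset.sum_add_distrib, Finset.sum_ite_eq', Finset.mem_univ, if_true]
      ring
    have sT : ∑ k : Fin m, F (Fin.natAdd n k) * F (Fin.castAdd m (Fin.castLE hmn k))
        = 2*(p*q) := by
      simp_rw [hab, Finset.sum_add_distrib, Finset.sum_ite_eq', Finset.mem_univ, if_true]
      ring
    refine ⟨F, ?_, ?_, ?_⟩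
    · rw [Fin.sum_univ_add (f := fun i => F i ^ 2), sA2, sB2, hq]
      linear_combination h8 + (2*p^2) * hs2
    · rw [Fin.sum_univ_add (f := fun i => F i), sA, sB]
      ring
    · rw [beard_Q_identity n m hmn F, sA, sB, sA2, sB2, sT, hq]
      linear_combination (2-s)*h8 + (6*p^2)*hs2
  · -- upper bound
    rintro x ⟨f, hnorm, hsum, hx⟩
    set s := Real.sqrt 2 with hs
    have hs2 : s^2 = 2 := Real.sq_sqrt (by norm_num)
    have hs0 : 0 ≤ s := Real.sqrt_nonneg 2
    have hs1 : 1 ≤ s := by nlinarith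
    set a : Fin n → ℝ := fun i => f (Fin.castAdd m i) with ha
    set b : Fin m → ℝ := fun k => f (Fin.natAdd n k) with hb
    have hN : (∑ i, a i ^ 2) + (∑ k, b k ^ 2) = 1 := by
      rw [← hnorm, Fin.sum_univ_add (f := fun i => f i ^ 2)]
    have hS : (∑ i, a i) + (∑ k, b k) = 0 := by
      rw [← hsum, Fin.sum_univ_add (f := fun i => f i)]
    rw [hx, beard_Q_identity n m hmn f]
    set A := ∑ i, a i
    set B := ∑ k, b k
    set Sa := ∑ i, a i ^ 2
    set Sb := ∑ k, b k ^ 2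
    set T := ∑ k : Fin m, b k * a (Fin.castLE hmn k) with hT
    have h1 : ∑ k : Fin m, (a (Fin.castLE hmn k))^2 ≤ Sa := by
      have e : ∑ k : Fin m, (a (Fin.castLE hmn k))^2
          = ∑ i ∈ Finset.univ.map ⟨Fin.castLE hmn, Fin.castLE_injective hmn⟩, a i ^ 2 := by
        rw [Finset.sum_map]; rfl
      rw [e]
      exact Finset.sum_le_univ_sum_of_nonneg (fun i => sq_nonneg _)
    have h2 : 0 ≤ ∑ k : Fin m, ((s-1)*(a (Fin.castLE hmn k))^2 + (s+1)*(b k)^2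
        + 2*(b k * a (Fin.castLE hmn k))) := by
      apply Finset.sum_nonneg
      intro k _
      nlinarith [sq_nonneg (a (Fin.castLE hmn k) + (1+s) * b k), sq_nonneg (b k)]
    have h2' : 0 ≤ (s-1)*(∑ k : Fin m, (a (Fin.castLE hmn k))^2) + (s+1)*Sb + 2*T := by
      rw [Finset.mul_sum, Finset.mul_sum, hT, Finset.mul_sum, ← Finset.sum_add_distrib,
        ← Finset.sum_add_distrib] at *
      exact h2
    have h3 : (s-1)*(∑ k : Fin m, (a (Fin.castLE hmn k))^2) ≤ (s-1)*Sa :=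
      mul_le_mul_of_nonneg_left h1 (by linarith)
    have hB : B = -A := by linarith
    have key : A ^ 2 - Sa + 3 * (B ^ 2 - Sb) + 4 * B * A - 2 * T = -Sa - 3*Sb - 2*T := by
      rw [hB]; ring
    rw [key]
    nlinarith [h2', h3, hN]
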